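/- arXiv:math/0605790 — 2 statements merged into one kernel-verified Lean document; each statement's English description precedes it below -/
import Mathlib

section
/- In the twisted Baby Fock model with γ_j = μ_j^{−1} β_j* + μ_j β_{−j} and δ_j = μ_j α_j* + μ_j^{−1} α_{−j}, for all i, j ∈ {1, …, k} one has γ_i δ_j = δ_j γ_i and γ_i δ_j* = δ_j* γ_i; in particular every δ_j lies in the commutant of the algebra generated by γ_1, …, γ_k. -/
noncomputable section BabyFock

variable {I : Type*} [Fintype I] [LinearOrder I]

/-- The left creation operator `β_i*` of the Baby Fock model, acting on the Hilbert space with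
orthonormal basis `(x_A)_{A ⊆ I}`:  `β_i*(x_A) = (∏_{j ∈ A, j < i} ε i j) • x_{A ∪ {i}}` if
`i ∉ A`, and `β_i*(x_A) = 0` if `i ∈ A`. -/
def crea (ε : I → I → ℂ) (i : I) :
    EuclideanSpace ℂ (Finset I) →L[ℂ] EuclideanSpace ℂ (Finset I) :=
  Matrix.toEuclideanCLM (𝕜 := ℂ)
    (Matrix.of fun B A : Finset I =>
      if i ∉ A ∧ B = insert i A then ∏ j ∈ A.filter (· < i), ε i j else 0)

/-- The left annihilation operator `β_i` (the adjoint of `β_i*`):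
`β_i(x_A) = (∏_{j ∈ A, j < i} ε i j) • x_{A \ {i}}` if `i ∈ A`, and `0` otherwise. -/
def anni (ε : I → I → ℂ) (i : I) :
    EuclideanSpace ℂ (Finset I) →L[ℂ] EuclideanSpace ℂ (Finset I) :=
  Matrix.toEuclideanCLM (𝕜 := ℂ)
    (Matrix.of fun B A : Finset I =>
      if i ∈ A ∧ B = A.erase i then ∏ j ∈ A.filter (· < i), ε i j else 0)

/-- The right creation operator `α_i*`:
`α_i*(x_A) = (∏_{j ∈ A, j > i} ε i j) • x_{A ∪ {i}}` if `i ∉ A`, and `0` otherwise. -/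
def creaR (ε : I → I → ℂ) (i : I) :
    EuclideanSpace ℂ (Finset I) →L[ℂ] EuclideanSpace ℂ (Finset I) :=
  Matrix.toEuclideanCLM (𝕜 := ℂ)
    (Matrix.of fun B A : Finset I =>
      if i ∉ A ∧ B = insert i A then ∏ j ∈ A.filter (i < ·), ε i j else 0)

/-- The right annihilation operator `α_i` (the adjoint of `α_i*`):
`α_i(x_A) = (∏_{j ∈ A, j > i} ε i j) • x_{A \ {i}}` if `i ∈ A`, and `0` otherwise. -/
def anniR (ε : I → I → ℂ) (i : I) :
    EuclideanSpace ℂ (Finset I) →L[ℂ] EuclideanSpace ℂ (Finset I) :=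
  Matrix.toEuclideanCLM (𝕜 := ℂ)
    (Matrix.of fun B A : Finset I =>
      if i ∈ A ∧ B = A.erase i then ∏ j ∈ A.filter (i < ·), ε i j else 0)

end BabyFock

noncomputable section

/-- The index set `I = {−k, …, −1} ∪ {1, …, k}` of the twisted Baby Fock model, as a subtype
of `ℤ`, with its natural linear order. -/
abbrev Ik (k : ℕ) : Type := {i : ℤ // i ∈ (Finset.Icc (-(k : ℤ)) (k : ℤ)).erase 0}

/-- The map `i ↦ -i` on the index set. -/
def negI {k : ℕ} (i : Ik k) : Ik k :=
  ⟨-i.1, by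
    have h := i.2
    simp only [Finset.mem_erase, Finset.mem_Icc] at h ⊢
    omega⟩

/-- The map `i ↦ |i|` on the index set. -/
def absI {k : ℕ} (i : Ik k) : Ik k :=
  ⟨|i.1|, by
    have h := i.2
    simp only [Finset.mem_erase, Finset.mem_Icc] at h ⊢
    rcases abs_cases i.1 with h' | h' <;> omega⟩

/-- For `j ∈ {1, …, k}` (encoded as `j : Fin k`), the corresponding positive element of the
index set. -/
def posIdx {k : ℕ} (j : Fin k) : Ik k :=
  ⟨(j : ℤ) + 1, by
    have h := j.isLt
    simp only [Finset.mem_erase, Finset.mem_Icc]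
    omega⟩

/-- The generalized semi-circular operator `γ_j = μ_j⁻¹ β_j* + μ_j β_{−j}` of the twisted
Baby Fock model, for `j ∈ {1, …, k}`. -/
def gam {k : ℕ} (ε : Ik k → Ik k → ℂ) (μ : Fin k → ℝ) (j : Fin k) :
    EuclideanSpace ℂ (Finset (Ik k)) →L[ℂ] EuclideanSpace ℂ (Finset (Ik k)) :=
  ((μ j : ℂ))⁻¹ • crea ε (posIdx j) + (μ j : ℂ) • anni ε (negI (posIdx j))

end

/-- The right generalized semi-circular operator `δ_j = μ_j α_j* + μ_j⁻¹ α_{−j}` of the twisted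
Baby Fock model. -/
noncomputable def del {k : ℕ} (ε : Ik k → Ik k → ℂ) (μ : Fin k → ℝ) (j : Fin k) :
    EuclideanSpace ℂ (Finset (Ik k)) →L[ℂ] EuclideanSpace ℂ (Finset (Ik k)) :=
  (μ j : ℂ) • creaR ε (posIdx j) + ((μ j : ℂ))⁻¹ • anniR ε (negI (posIdx j))

noncomputable section AuxBF

open Finset

variable {I : Type*} [Fintype I] [LinearOrder I]

open Classical in
def pmat (P : Finset I → Prop) (m : Finset I → Finset I) (v : Finset I → ℂ) :
    Matrix (Finset I) (Finset I) ℂ :=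
  Matrix.of fun B A => if P A ∧ B = m A then v A else 0

open Classical in
lemma pmat_apply (P : Finset I → Prop) (m v B A) :
    pmat (I := I) P m v B A = if P A ∧ B = m A then v A else 0 := rfl

lemma pmat_mul (P₁ P₂ : Finset I → Prop) (m₁ m₂ v₁ v₂) :
    pmat (I := I) P₁ m₁ v₁ * pmat P₂ m₂ v₂ =
      pmat (fun A => P₂ A ∧ P₁ (m₂ A)) (fun A => m₁ (m₂ A))
        (fun A => v₁ (m₂ A) * v₂ A) := by
  classical
  ext B A
  rw [Matrix.mul_apply]
  rw [Finset.sum_eq_single (m₂ A) (fun C _ hC => by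
    rw [pmat_apply P₂, if_neg (fun h => hC h.2), mul_zero]) (by simp)]
  simp only [pmat_apply, and_true]
  by_cases h2 : P₂ A
  · rw [if_pos h2]
    by_cases h1 : P₁ (m₂ A) ∧ B = m₁ (m₂ A)
    · rw [if_pos h1, if_pos ⟨⟨h2, h1.1⟩, h1.2⟩]
    · rw [if_neg h1, if_neg (fun h => h1 ⟨h.1.2, h.2⟩), zero_mul]
  · rw [if_neg h2, mul_zero, if_neg (fun h => h2 h.1.1)]

lemma pmat_congr {P P' : Finset I → Prop} {m m' v v'}
    (hP : ∀ A, P A ↔ P' A) (hm : ∀ A, P A → m A = m' A)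
    (hv : ∀ A, P A → v A = v' A) :
    pmat (I := I) P m v = pmat P' m' v' := by
  classical
  ext B A
  rw [pmat_apply, pmat_apply]
  by_cases h : P A
  · rw [hm A h, hv A h]
    exact if_congr (and_congr_left' (hP A)) rfl rfl
  · rw [if_neg (fun hh => h hh.1), if_neg (fun hh => h ((hP A).mpr hh.1))]

variable (ε : I → I → ℂ)

def vlt (i : I) (A : Finset I) : ℂ := ∏ j ∈ A.filter (· < i), ε i j

def vgt (i : I) (A : Finset I) : ℂ := ∏ j ∈ A.filter (i < ·), ε i j

lemma crea_pmat (i : I) :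
    crea ε i = Matrix.toEuclideanCLM (𝕜 := ℂ)
      (pmat (fun A => i ∉ A) (insert i) (vlt ε i)) := by
  unfold crea pmat vlt
  exact congrArg _ (by ext B A; dsimp only [Matrix.of_apply]; congr)

lemma anni_pmat (i : I) :
    anni ε i = Matrix.toEuclideanCLM (𝕜 := ℂ)
      (pmat (fun A => i ∈ A) (fun A => A.erase i) (vlt ε i)) := by
  unfold anni pmat vlt
  exact congrArg _ (by ext B A; dsimp only [Matrix.of_apply]; congr)

lemma creaR_pmat (i : I) :
    creaR ε i = Matrix.toEuclideanCLM (𝕜 := ℂ)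
      (pmat (fun A => i ∉ A) (insert i) (vgt ε i)) := by
  unfold creaR pmat vgt
  exact congrArg _ (by ext B A; dsimp only [Matrix.of_apply]; congr)

lemma anniR_pmat (i : I) :
    anniR ε i = Matrix.toEuclideanCLM (𝕜 := ℂ)
      (pmat (fun A => i ∈ A) (fun A => A.erase i) (vgt ε i)) := by
  unfold anniR pmat vgt
  exact congrArg _ (by ext B A; dsimp only [Matrix.of_apply]; congr)

def mC (i : I) := pmat (fun A => i ∉ A) (insert i) (vlt ε i)
def mA (i : I) := pmat (fun A => i ∈ A) (fun A => A.erase i) (vlt ε i)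
def mCR (i : I) := pmat (fun A => i ∉ A) (insert i) (vgt ε i)
def mAR (i : I) := pmat (fun A => i ∈ A) (fun A => A.erase i) (vgt ε i)

lemma vlt_insert (i : I) {j : I} {A : Finset I} (h : j ∉ A) :
    vlt ε i (insert j A) = (if j < i then ε i j else 1) * vlt ε i A := by
  unfold vlt
  rw [Finset.filter_insert]
  split_ifs with hj
  · rw [Finset.prod_insert (fun hc => h (Finset.mem_of_mem_filter j hc))]
  · rw [one_mul]

lemma vgt_insert (i : I) {j : I} {A : Finset I} (h : j ∉ A) :
    vgt ε i (insert j A) = (if i < j then ε i j else 1) * vgt ε i A := by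
  unfold vgt
  rw [Finset.filter_insert]
  split_ifs with hj
  · rw [Finset.prod_insert (fun hc => h (Finset.mem_of_mem_filter j hc))]
  · rw [one_mul]

lemma vlt_erase (i : I) {j : I} {A : Finset I} (h : j ∈ A) :
    vlt ε i A = (if j < i then ε i j else 1) * vlt ε i (A.erase j) := by
  conv_lhs => rw [← Finset.insert_erase h]
  rw [vlt_insert ε i (Finset.notMem_erase j A)]

lemma vgt_erase (i : I) {j : I} {A : Finset I} (h : j ∈ A) :
    vgt ε i A = (if i < j then ε i j else 1) * vgt ε i (A.erase j) := by
  conv_lhs => rw [← Finset.insert_erase h]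
  rw [vgt_insert ε i (Finset.notMem_erase j A)]

lemma vlt_erase_self (i : I) (A : Finset I) : vlt ε i (A.erase i) = vlt ε i A := by
  unfold vlt
  rw [Finset.filter_erase, Finset.erase_eq_of_notMem (by simp)]

lemma vgt_erase_self (i : I) (A : Finset I) : vgt ε i (A.erase i) = vgt ε i A := by
  unfold vgt
  rw [Finset.filter_erase, Finset.erase_eq_of_notMem (by simp)]

variable {ε}

lemma csq (hval : ∀ i j, ε i j = 1 ∨ ε i j = -1) (c : Prop) [Decidable c] (i j : I) :
    (if c then ε i j else 1) * (if c then ε i j else 1) = 1 := by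
  split_ifs with h
  · rcases hval i j with h' | h' <;> rw [h'] <;> ring
  · rw [one_mul]

lemma vlt_erase' (hval : ∀ i j, ε i j = 1 ∨ ε i j = -1) (i : I) {j : I} {A : Finset I}
    (h : j ∈ A) :
    vlt ε i (A.erase j) = (if j < i then ε i j else 1) * vlt ε i A := by
  rw [vlt_erase ε i h, ← mul_assoc, csq hval, one_mul]

lemma vgt_erase' (hval : ∀ i j, ε i j = 1 ∨ ε i j = -1) (i : I) {j : I} {A : Finset I}
    (h : j ∈ A) :
    vgt ε i (A.erase j) = (if i < j then ε i j else 1) * vgt ε i A := by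
  rw [vgt_erase ε i h, ← mul_assoc, csq hval, one_mul]

lemma comm_CC (hsym : ∀ i j, ε i j = ε j i) (i j : I) :
    mC ε i * mCR ε j = mCR ε j * mC ε i := by
  unfold mC mCR
  rw [pmat_mul, pmat_mul]
  refine pmat_congr (fun A => ?_) (fun A h => ?_) (fun A h => ?_)
  · simp only [Finset.mem_insert, not_or]
    tauto
  · exact Finset.insert_comm i j A
  · simp only [Finset.mem_insert, not_or] at h
    rw [vlt_insert ε i h.1, vgt_insert ε j h.2.2, hsym i j]
    ring

lemma comm_AA (hsym : ∀ i j, ε i j = ε j i) (i j : I) :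
    mA ε i * mAR ε j = mAR ε j * mA ε i := by
  unfold mA mAR
  rw [pmat_mul, pmat_mul]
  refine pmat_congr (fun A => ?_) (fun A h => ?_) (fun A h => ?_)
  · simp only [Finset.mem_erase]
    tauto
  · exact Finset.erase_right_comm
  · simp only [Finset.mem_erase] at h
    rw [vgt_erase ε j h.2.2 (A := A), vlt_erase ε i h.1 (A := A), hsym i j]
    ring

lemma comm_CA (hval : ∀ i j, ε i j = 1 ∨ ε i j = -1) (hsym : ∀ i j, ε i j = ε j i)
    {i j : I} (hij : i ≠ j) :
    mC ε i * mAR ε j = mAR ε j * mC ε i := by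
  unfold mC mAR
  rw [pmat_mul, pmat_mul]
  have hji := hij.symm
  refine pmat_congr (fun A => ?_) (fun A h => ?_) (fun A h => ?_)
  · simp only [Finset.mem_erase, Finset.mem_insert]
    tauto
  · exact (Finset.erase_insert_of_ne hij).symm
  · have hjA : j ∈ A := h.1
    have hiA : i ∉ A := fun hc => h.2 (Finset.mem_erase.mpr ⟨hij, hc⟩)
    rw [vlt_erase' hval i hjA, vgt_insert ε j hiA, hsym i j]
    ring

lemma comm_AC (hval : ∀ i j, ε i j = 1 ∨ ε i j = -1) (hsym : ∀ i j, ε i j = ε j i)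
    {i j : I} (hij : i ≠ j) :
    mA ε i * mCR ε j = mCR ε j * mA ε i := by
  unfold mA mCR
  rw [pmat_mul, pmat_mul]
  have hji := hij.symm
  refine pmat_congr (fun A => ?_) (fun A h => ?_) (fun A h => ?_)
  · simp only [Finset.mem_erase, Finset.mem_insert]
    tauto
  · exact Finset.erase_insert_of_ne hji
  · have hjA : j ∉ A := h.1
    have hiA : i ∈ A := by
      rcases Finset.mem_insert.mp h.2 with hc | hc
      · exact absurd hc hij
      · exact hc
    rw [vlt_insert ε i hjA, vgt_erase' hval j hiA, hsym i j]
    ring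

lemma w_eq (i : I) (A : Finset I) :
    vlt ε i A * vgt ε i A = ∏ l ∈ A.erase i, ε i l := by
  rw [← vlt_erase_self ε i A, ← vgt_erase_self ε i A]
  unfold vlt vgt
  rw [← Finset.prod_filter_mul_prod_filter_not (A.erase i) (· < i) (ε i)]
  congr 1
  refine Finset.prod_congr ?_ fun _ _ => rfl
  ext l
  simp only [Finset.mem_filter, Finset.mem_erase]
  constructor
  · rintro ⟨⟨hne, hA⟩, hl⟩
    exact ⟨⟨hne, hA⟩, fun hc => lt_asymm hl hc⟩
  · rintro ⟨⟨hne, hA⟩, hnl⟩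
    exact ⟨⟨hne, hA⟩, lt_of_le_of_ne (le_of_not_gt hnl) hne.symm⟩

lemma star_vgt (hval : ∀ i j, ε i j = 1 ∨ ε i j = -1) (i : I) (A : Finset I) :
    star (vgt ε i A) = vgt ε i A := by
  unfold vgt
  rw [show (star : ℂ → ℂ) = starRingEnd ℂ from rfl, map_prod]
  refine Finset.prod_congr rfl fun j _ => ?_
  rcases hval i j with h | h <;> simp [h]

lemma star_mCR (hval : ∀ i j, ε i j = 1 ∨ ε i j = -1) (i : I) :
    star (mCR ε i) = mAR ε i := by
  classical
  ext B A
  rw [Matrix.star_apply]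
  unfold mCR mAR
  rw [pmat_apply, pmat_apply]
  by_cases h : i ∈ A ∧ B = A.erase i
  · obtain ⟨h1, h2⟩ := h
    subst h2
    rw [if_pos (⟨h1, rfl⟩ : i ∈ A ∧ A.erase i = A.erase i),
      if_pos (⟨Finset.notMem_erase i A, (Finset.insert_erase h1).symm⟩ :
        i ∉ A.erase i ∧ A = insert i (A.erase i)),
      vgt_erase_self, star_vgt hval]
  · rw [if_neg h,
      if_neg (fun hc => h ⟨by rw [hc.2]; exact Finset.mem_insert_self i B,
        by rw [hc.2, Finset.erase_insert hc.1]⟩),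
      star_zero]

lemma star_mAR (hval : ∀ i j, ε i j = 1 ∨ ε i j = -1) (i : I) :
    star (mAR ε i) = mCR ε i := by
  rw [← star_mCR hval i, star_star]

lemma L5 (p n : I) (hpn : ∀ l, ε p l = ε n l) (hp : ε p p = -1) (hn : ε n n = -1) :
    mC ε p * mAR ε p + mA ε n * mCR ε n = mAR ε p * mC ε p + mCR ε n * mA ε n := by
  classical
  have e1 : mC ε p * mAR ε p = pmat (fun A => p ∈ A) id (fun A => vlt ε p A * vgt ε p A) := by
    unfold mC mAR
    rw [pmat_mul]
    refine pmat_congr (fun A => ?_) (fun A h => ?_) (fun A h => ?_)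
    · simp [Finset.notMem_erase]
    · exact Finset.insert_erase h.1
    · rw [vlt_erase_self]
  have e2 : mAR ε p * mC ε p = pmat (fun A => p ∉ A) id (fun A => vlt ε p A * vgt ε p A) := by
    unfold mC mAR
    rw [pmat_mul]
    refine pmat_congr (fun A => ?_) (fun A h => ?_) (fun A h => ?_)
    · simp
    · exact Finset.erase_insert h.1
    · rw [vgt_insert ε p (h.1), if_neg (lt_irrefl p), one_mul, mul_comm]
  have e3 : mA ε n * mCR ε n = pmat (fun A => n ∉ A) id (fun A => vlt ε n A * vgt ε n A) := by
    unfold mA mCR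
    rw [pmat_mul]
    refine pmat_congr (fun A => ?_) (fun A h => ?_) (fun A h => ?_)
    · simp
    · exact Finset.erase_insert h.1
    · rw [vlt_insert ε n (h.1), if_neg (lt_irrefl n), one_mul]
  have e4 : mCR ε n * mA ε n = pmat (fun A => n ∈ A) id (fun A => vlt ε n A * vgt ε n A) := by
    unfold mA mCR
    rw [pmat_mul]
    refine pmat_congr (fun A => ?_) (fun A h => ?_) (fun A h => ?_)
    · simp [Finset.notMem_erase]
    · exact Finset.insert_erase h.1
    · rw [vgt_erase_self, mul_comm]
  rw [e1, e2, e3, e4]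
  ext B A
  simp only [Matrix.add_apply, pmat_apply, id]
  by_cases hBA : B = A
  · subst hBA
    set S := ∏ l ∈ B, ε p l with hS
    have hS' : ∏ l ∈ B, ε n l = S := Finset.prod_congr rfl fun l _ => (hpn l).symm
    have wp_mem : p ∈ B → vlt ε p B * vgt ε p B = -S := fun h => by
      rw [w_eq]
      have h2 := Finset.mul_prod_erase B (ε p) h
      rw [hp, ← hS] at h2
      linear_combination -h2
    have wp_not : p ∉ B → vlt ε p B * vgt ε p B = S := fun h => by
      rw [w_eq, Finset.erase_eq_of_notMem h, hS]
    have wn_mem : n ∈ B → vlt ε n B * vgt ε n B = -S := fun h => by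
      rw [w_eq]
      have h2 := Finset.mul_prod_erase B (ε n) h
      rw [hn, hS'] at h2
      linear_combination -h2
    have wn_not : n ∉ B → vlt ε n B * vgt ε n B = S := fun h => by
      rw [w_eq, Finset.erase_eq_of_notMem h, hS']
    by_cases hpB : p ∈ B <;> by_cases hnB : n ∈ B
    · rw [if_pos ⟨hpB, rfl⟩, if_neg (fun h => h.1 hnB), if_neg (fun h => h.1 hpB),
        if_pos ⟨hnB, rfl⟩, wp_mem hpB, wn_mem hnB]
      ring
    · rw [if_pos ⟨hpB, rfl⟩, if_pos ⟨hnB, rfl⟩, if_neg (fun h => h.1 hpB),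
        if_neg (fun h => hnB h.1), wp_mem hpB, wn_not hnB]
      ring
    · rw [if_neg (fun h => hpB h.1), if_neg (fun h => h.1 hnB), if_pos ⟨hpB, rfl⟩,
        if_pos ⟨hnB, rfl⟩, wp_not hpB, wn_mem hnB]
      ring
    · rw [if_neg (fun h => hpB h.1), if_pos ⟨hnB, rfl⟩, if_pos ⟨hpB, rfl⟩,
        if_neg (fun h => hnB h.1), wp_not hpB, wn_not hnB]
      ring
  · rw [if_neg (fun h => hBA h.2), if_neg (fun h => hBA h.2), if_neg (fun h => hBA h.2),
      if_neg (fun h => hBA h.2)]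

end AuxBF

noncomputable section AuxBF2

variable {J : Type*} [Fintype J] [DecidableEq J]

lemma expand_comm (a b c d : Matrix J J ℂ) (s t u v : ℂ)
    (hac : a * c = c * a) (had : a * d = d * a)
    (hbc : b * c = c * b) (hbd : b * d = d * b) :
    (s • a + t • b) * (u • c + v • d) = (u • c + v • d) * (s • a + t • b) := by
  simp only [add_mul, mul_add, Matrix.smul_mul, Matrix.mul_smul, smul_smul]
  rw [hac, had, hbc, hbd, mul_comm u s, mul_comm v s, mul_comm u t, mul_comm v t]
  abel

lemma expand_comm' (a b c d : Matrix J J ℂ) (s t u v : ℂ)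
    (hsu : s * u = 1) (htv : t * v = 1)
    (had : a * d = d * a) (hbc : b * c = c * b)
    (hsum : a * c + b * d = c * a + d * b) :
    (s • a + t • b) * (u • c + v • d) = (u • c + v • d) * (s • a + t • b) := by
  have hsu' : u * s = 1 := by rw [mul_comm]; exact hsu
  have htv' : v * t = 1 := by rw [mul_comm]; exact htv
  calc (s • a + t • b) * (u • c + v • d)
      = (a * c + b * d) + ((s * v) • (d * a) + (t * u) • (c * b)) := by
        simp only [add_mul, mul_add, Matrix.smul_mul, Matrix.mul_smul, smul_smul, hsu, htv,
          hsu', htv', had, hbc, one_smul, mul_comm u t, mul_comm v s]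
        abel
    _ = (c * a + d * b) + ((s * v) • (d * a) + (t * u) • (c * b)) := by rw [hsum]
    _ = (u • c + v • d) * (s • a + t • b) := by
        simp only [add_mul, mul_add, Matrix.smul_mul, Matrix.mul_smul, smul_smul, hsu, htv,
          hsu', htv', one_smul, mul_comm u t, mul_comm v s]
        abel

end AuxBF2

section IkFacts

lemma posIdx_ne_negI {k : ℕ} (i j : Fin k) : posIdx i ≠ negI (posIdx j) := by
  intro h
  have h' := congrArg Subtype.val h
  simp only [posIdx, negI] at h'
  omega

lemma negI_ne_posIdx {k : ℕ} (i j : Fin k) : negI (posIdx i) ≠ posIdx j :=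
  (posIdx_ne_negI j i).symm

lemma posIdx_inj {k : ℕ} {i j : Fin k} (h : i ≠ j) : posIdx i ≠ posIdx j := by
  intro hc
  have h' := congrArg Subtype.val hc
  simp only [posIdx] at h'
  exact h (Fin.ext (by omega))

lemma negI_posIdx_inj {k : ℕ} {i j : Fin k} (h : i ≠ j) :
    negI (posIdx i) ≠ negI (posIdx j) := by
  intro hc
  have h' := congrArg Subtype.val hc
  simp only [posIdx, negI] at h'
  exact h (Fin.ext (by omega))

lemma absI_negI {k : ℕ} (i : Ik k) : absI (negI i) = absI i := by
  apply Subtype.ext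
  simp [absI, negI, abs_neg]

end IkFacts

/-- In the twisted Baby Fock model, `γ_i δ_j = δ_j γ_i` and
`γ_i δ_j* = δ_j* γ_i` for all `i, j ∈ {1, …, k}`; in particular every `δ_j` lies in the
commutant of the algebra generated by `γ_1, …, γ_k`. -/
theorem stmt10 (k : ℕ) (hk : 1 ≤ k) (ε : Ik k → Ik k → ℂ)
    (hval : ∀ i j, ε i j = 1 ∨ ε i j = -1)
    (hsym : ∀ i j, ε i j = ε j i)
    (hdiag : ∀ i, ε i i = -1)
    (htw : ∀ i j, ε i j = ε (absI i) (absI j))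
    (μ : Fin k → ℝ) (hμ : ∀ j, 1 ≤ μ j) :
    (∀ i j : Fin k,
      gam ε μ i * del ε μ j = del ε μ j * gam ε μ i ∧
      gam ε μ i * star (del ε μ j) = star (del ε μ j) * gam ε μ i) ∧
    (∀ j : Fin k, ∀ T ∈ Algebra.adjoin ℂ (Set.range (gam ε μ)),
      del ε μ j * T = T * del ε μ j) := by
  have hμ0 : ∀ j, (μ j : ℂ) ≠ 0 := fun j => by
    have := hμ j
    simp only [ne_eq, Complex.ofReal_eq_zero]
    nlinarith
  have hpn : ∀ (j : Fin k) (l : Ik k), ε (posIdx j) l = ε (negI (posIdx j)) l := by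
    intro j l
    rw [htw (posIdx j) l, htw (negI (posIdx j)) l, absI_negI]
  have hgam : ∀ i, gam ε μ i = Matrix.toEuclideanCLM (𝕜 := ℂ)
      (((μ i : ℂ))⁻¹ • mC ε (posIdx i) + (μ i : ℂ) • mA ε (negI (posIdx i))) := by
    intro i
    rw [gam, crea_pmat, anni_pmat, map_add, map_smul, map_smul]
    rfl
  have hdel : ∀ j, del ε μ j = Matrix.toEuclideanCLM (𝕜 := ℂ)
      ((μ j : ℂ) • mCR ε (posIdx j) + ((μ j : ℂ))⁻¹ • mAR ε (negI (posIdx j))) := by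
    intro j
    rw [del, creaR_pmat, anniR_pmat, map_add, map_smul, map_smul]
    rfl
  have hdelstar : ∀ j, star (del ε μ j) = Matrix.toEuclideanCLM (𝕜 := ℂ)
      ((μ j : ℂ) • mAR ε (posIdx j) + ((μ j : ℂ))⁻¹ • mCR ε (negI (posIdx j))) := by
    intro j
    rw [hdel j, ← map_star]
    congr 1
    rw [star_add, star_smul, star_smul, star_mCR hval, star_mAR hval]
    have h1 : star ((μ j : ℂ)) = (μ j : ℂ) := by
      simp [Complex.star_def, Complex.conj_ofReal]
    have h2 : star (((μ j : ℂ))⁻¹) = ((μ j : ℂ))⁻¹ := by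
      simp [Complex.star_def, map_inv₀, Complex.conj_ofReal]
    rw [h1, h2]
  have key : ∀ i j : Fin k,
      gam ε μ i * del ε μ j = del ε μ j * gam ε μ i ∧
      gam ε μ i * star (del ε μ j) = star (del ε μ j) * gam ε μ i := by
    intro i j
    constructor
    · rw [hgam i, hdel j, ← map_mul, ← map_mul]
      congr 1
      exact expand_comm _ _ _ _ _ _ _ _
        (comm_CC hsym _ _)
        (comm_CA hval hsym (posIdx_ne_negI i j))
        (comm_AC hval hsym (negI_ne_posIdx i j))
        (comm_AA hsym _ _)
    · rw [hgam i, hdelstar j, ← map_mul, ← map_mul]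
      congr 1
      by_cases hij : i = j
      · subst hij
        exact expand_comm' _ _ _ _ _ _ _ _
          (inv_mul_cancel₀ (hμ0 i)) (mul_inv_cancel₀ (hμ0 i))
          (comm_CC hsym _ _)
          (comm_AA hsym _ _)
          (L5 _ _ (hpn i) (hdiag _) (hdiag _))
      · exact expand_comm _ _ _ _ _ _ _ _
          (comm_CA hval hsym (posIdx_inj hij))
          (comm_CC hsym _ _)
          (comm_AA hsym _ _)
          (comm_AC hval hsym (negI_posIdx_inj hij))
  refine ⟨key, ?_⟩
  intro j T hT
  induction hT using Algebra.adjoin_induction with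
  | mem x hx =>
    obtain ⟨i, rfl⟩ := hx
    exact ((key i j).1).symm
  | algebraMap r => exact (Algebra.commutes r (del ε μ j)).symm
  | add x y hx hy hx' hy' => rw [mul_add, add_mul, hx', hy']
  | mul x y hx hy hx' hy' => rw [← mul_assoc, hx', mul_assoc, hy', ← mul_assoc]
end

section
/- In the twisted Baby Fock model with γ_j = μ_j^{−1} β_j* + μ_j β_{−j} and λ_j = μ_j⁴: let Δ be the positive invertible diagonal operator on H_ε defined by Δ(x_A) = (∏_{j=1}^k λ_j^{χ_j − χ_{−j}}) x_A (where χ_i = 1 if i ∈ A and 0 otherwise). Then for every j ∈ {1, …, k}, Δ γ_j Δ^{−1} = λ_j γ_j, i.e. Δ γ_j = λ_j γ_j Δ. -/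
/-- The indicator `χ_i ∈ {0, 1}` of `i ∈ A`, as an integer. -/
def chi {k : ℕ} (A : Finset (Ik k)) (i : Ik k) : ℤ := if i ∈ A then 1 else 0

theorem EuclideanSpace.clm_ext_single {ι 𝕜 : Type*} [Fintype ι] [DecidableEq ι] [RCLike 𝕜]
    {f g : EuclideanSpace 𝕜 ι →L[𝕜] EuclideanSpace 𝕜 ι}
    (h : ∀ i, f (EuclideanSpace.single i 1) = g (EuclideanSpace.single i 1)) : f = g :=
  ContinuousLinearMap.coe_inj.mp <|
    (EuclideanSpace.basisFun ι 𝕜).toBasis.ext fun i => by simpa using h i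

theorem Matrix.toEuclideanCLM_single_one_apply {ι 𝕜 : Type*} [Fintype ι] [DecidableEq ι]
    [RCLike 𝕜] (M : Matrix ι ι 𝕜) (i j : ι) :
    Matrix.toEuclideanCLM (𝕜 := 𝕜) M (EuclideanSpace.single i 1) j = M j i := by
  change M.mulVec (Pi.single i 1) j = M j i
  simp

theorem Fintype.prod_zpow_add_single {ι G : Type*} [Fintype ι] [DecidableEq ι]
    [CommGroupWithZero G] (x : ι → G) (e : ι → ℤ) {j : ι} (hj : x j ≠ 0) :
    ∏ i, x i ^ (e + Pi.single j 1 : ι → ℤ) i = x j * ∏ i, x i ^ e i := by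
  rw [Fintype.prod_eq_mul_prod_compl j, Fintype.prod_eq_mul_prod_compl j (fun i => x i ^ e i),
    Pi.add_apply, Pi.single_eq_same, zpow_add_one₀ hj, mul_comm (x j ^ e j) (x j), mul_assoc]
  congr 2
  refine Finset.prod_congr rfl fun i hi => ?_
  rw [Pi.add_apply, Pi.single_eq_of_ne (by simpa using hi), add_zero]

section BabyFock

variable {I : Type*} [Fintype I] [LinearOrder I]

theorem crea_single (ε : I → I → ℂ) (i : I) (A : Finset I) :
    crea ε i (EuclideanSpace.single A 1) =
      if i ∈ A then 0
      else (∏ j ∈ A.filter (· < i), ε i j) • EuclideanSpace.single (insert i A) 1 := by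
  ext B
  rw [crea, Matrix.toEuclideanCLM_single_one_apply]
  by_cases hi : i ∈ A
  · simp [hi]
  · by_cases hB : B = insert i A <;> simp [hi, hB]

theorem anni_single (ε : I → I → ℂ) (i : I) (A : Finset I) :
    anni ε i (EuclideanSpace.single A 1) =
      if i ∈ A then (∏ j ∈ A.filter (· < i), ε i j) • EuclideanSpace.single (A.erase i) 1
      else 0 := by
  ext B
  rw [anni, Matrix.toEuclideanCLM_single_one_apply]
  by_cases hi : i ∈ A
  · by_cases hB : B = A.erase i <;> simp [hi, hB]
  · simp [hi]

variable {D : EuclideanSpace ℂ (Finset I) →L[ℂ] EuclideanSpace ℂ (Finset I)}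
  {w : Finset I → ℂ}

theorem diagonal_mul_crea
    (hD : ∀ A, D (EuclideanSpace.single A 1) = w A • EuclideanSpace.single A 1)
    (ε : I → I → ℂ) (i : I) (c : ℂ) (hw : ∀ A, i ∉ A → w (insert i A) = c * w A) :
    D * crea ε i = c • (crea ε i * D) := by
  refine EuclideanSpace.clm_ext_single fun A => ?_
  by_cases hi : i ∈ A
  · simp [crea_single, hD, hi]
  · simp only [mul_apply_eq_comp, smul_apply, hD, map_smul,
      crea_single, hi, if_false, hw A hi, smul_smul]
    ring_nf

theorem diagonal_mul_anni
    (hD : ∀ A, D (EuclideanSpace.single A 1) = w A • EuclideanSpace.single A 1)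
    (ε : I → I → ℂ) (i : I) (c : ℂ) (hw : ∀ A, i ∈ A → w (A.erase i) = c * w A) :
    D * anni ε i = c • (anni ε i * D) := by
  refine EuclideanSpace.clm_ext_single fun A => ?_
  by_cases hi : i ∈ A
  · simp only [mul_apply_eq_comp, smul_apply, hD, map_smul,
      anni_single, hi, if_true, hw A hi, smul_smul]
    ring_nf
  · simp [anni_single, hD, hi]

end BabyFock

section TwistedIndex

variable {k : ℕ}

theorem posIdx_injective : Function.Injective (posIdx (k := k)) := fun j j' h => by
  have := congrArg Subtype.val h
  simp only [posIdx] at this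
  exact Fin.ext (by omega)

theorem negI_injective : Function.Injective (negI (k := k)) := fun i i' h => by
  have := congrArg Subtype.val h
  simp only [negI, neg_inj] at this
  exact Subtype.ext this

theorem negI_posIdx_ne_posIdx (j j' : Fin k) : negI (posIdx j) ≠ posIdx j' := fun h => by
  have := congrArg Subtype.val h
  simp only [negI, posIdx] at this
  omega

theorem chi_insert {A : Finset (Ik k)} {a : Ik k} (ha : a ∉ A) (b : Ik k) :
    chi (insert a A) b = chi A b + if b = a then 1 else 0 := by
  by_cases hb : b = a
  · subst hb; simp [chi, ha]
  · simp [chi, hb]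

theorem chi_erase {A : Finset (Ik k)} {a : Ik k} (ha : a ∈ A) (b : Ik k) :
    chi (A.erase a) b = chi A b - if b = a then 1 else 0 := by
  by_cases hb : b = a
  · subst hb; simp [chi, ha]
  · simp [chi, hb]

def charge (A : Finset (Ik k)) (j : Fin k) : ℤ := chi A (posIdx j) - chi A (negI (posIdx j))

theorem charge_insert_posIdx {A : Finset (Ik k)} {j : Fin k} (hA : posIdx j ∉ A) :
    charge (insert (posIdx j) A) = charge A + Pi.single j 1 := by
  funext j'
  simp only [charge, chi_insert hA, posIdx_injective.eq_iff, negI_posIdx_ne_posIdx,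
    if_false, Pi.add_apply, Pi.single_apply]
  ring

theorem charge_erase_negI {A : Finset (Ik k)} {j : Fin k} (hA : negI (posIdx j) ∈ A) :
    charge (A.erase (negI (posIdx j))) = charge A + Pi.single j 1 := by
  funext j'
  simp only [charge, chi_erase hA, negI_injective.eq_iff, posIdx_injective.eq_iff,
    (negI_posIdx_ne_posIdx _ _).symm, if_false, Pi.add_apply, Pi.single_apply]
  ring

theorem prod_zpow_charge_insert_posIdx {G : Type*} [CommGroupWithZero G] (x : Fin k → G)
    {A : Finset (Ik k)} {j : Fin k} (hx : x j ≠ 0) (hA : posIdx j ∉ A) :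
    ∏ j', x j' ^ charge (insert (posIdx j) A) j' = x j * ∏ j', x j' ^ charge A j' := by
  rw [charge_insert_posIdx hA, Fintype.prod_zpow_add_single x _ hx]

theorem prod_zpow_charge_erase_negI {G : Type*} [CommGroupWithZero G] (x : Fin k → G)
    {A : Finset (Ik k)} {j : Fin k} (hx : x j ≠ 0) (hA : negI (posIdx j) ∈ A) :
    ∏ j', x j' ^ charge (A.erase (negI (posIdx j))) j' = x j * ∏ j', x j' ^ charge A j' := by
  rw [charge_erase_negI hA, Fintype.prod_zpow_add_single x _ hx]

end TwistedIndex

theorem stmt14_general (k : ℕ) (ε : Ik k → Ik k → ℂ)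
    (μ : Fin k → ℝ) (hμ : ∀ j, 1 ≤ μ j)
    (Δ : EuclideanSpace ℂ (Finset (Ik k)) →L[ℂ] EuclideanSpace ℂ (Finset (Ik k)))
    (hΔ : ∀ A : Finset (Ik k),
      Δ (EuclideanSpace.single A (1 : ℂ)) =
        (∏ j : Fin k, ((μ j : ℂ) ^ (4 : ℕ)) ^ (chi A (posIdx j) - chi A (negI (posIdx j)))) •
          EuclideanSpace.single A (1 : ℂ)) :
    ∀ j : Fin k, Δ * gam ε μ j = ((μ j : ℂ) ^ (4 : ℕ)) • (gam ε μ j * Δ) := by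
  intro j
  have hΔ' : ∀ A, Δ (EuclideanSpace.single A 1) =
      (∏ j', ((μ j' : ℂ) ^ 4) ^ charge A j') • EuclideanSpace.single A 1 := hΔ
  have hlam : (μ j : ℂ) ^ 4 ≠ 0 :=
    pow_ne_zero _ (Complex.ofReal_ne_zero.mpr (by linarith [hμ j]))
  have hcrea := diagonal_mul_crea hΔ' ε (posIdx j) _ fun A hA =>
    prod_zpow_charge_insert_posIdx _ hlam hA
  have hanni := diagonal_mul_anni hΔ' ε (negI (posIdx j)) _ fun A hA =>
    prod_zpow_charge_erase_negI _ hlam hA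
  simp only [gam, mul_add, add_mul, mul_smul_comm, smul_mul_assoc, hcrea, hanni, smul_add,
    smul_comm ((μ j : ℂ) ^ 4)]

/-- In the twisted Baby Fock model, let `Δ` be the positive invertible
diagonal operator with `Δ x_A = (∏_j λ_j^{χ_j − χ_{−j}}) x_A`, where `λ_j = μ_j⁴`.  Then for
every `j ∈ {1, …, k}` one has `Δ γ_j Δ⁻¹ = λ_j γ_j`, i.e. `Δ γ_j = λ_j γ_j Δ`. -/
theorem stmt14 (k : ℕ) (hk : 1 ≤ k) (ε : Ik k → Ik k → ℂ)
    (hval : ∀ i j, ε i j = 1 ∨ ε i j = -1)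
    (hsym : ∀ i j, ε i j = ε j i)
    (hdiag : ∀ i, ε i i = -1)
    (htw : ∀ i j, ε i j = ε (absI i) (absI j))
    (μ : Fin k → ℝ) (hμ : ∀ j, 1 ≤ μ j)
    (Δ : EuclideanSpace ℂ (Finset (Ik k)) →L[ℂ] EuclideanSpace ℂ (Finset (Ik k)))
    (hΔpos : Δ.IsPositive) (hΔinv : IsUnit Δ)
    (hΔ : ∀ A : Finset (Ik k),
      Δ (EuclideanSpace.single A (1 : ℂ)) =
        (∏ j : Fin k, ((μ j : ℂ) ^ (4 : ℕ)) ^ (chi A (posIdx j) - chi A (negI (posIdx j)))) •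
          EuclideanSpace.single A (1 : ℂ)) :
    ∀ j : Fin k, Δ * gam ε μ j = ((μ j : ℂ) ^ (4 : ℕ)) • (gam ε μ j * Δ) :=
  stmt14_general k ε μ hμ Δ hΔ
end
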